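/- Let f : ℝᵖ → ℝ satisfy the bimodal Hessian condition with constants L, μ, κ_+, κ_-, ε and subspace S, and let θ_⋆ be its minimizer. Then for every θ ∈ ℝᵖ, the gradient step with the stable learning rate η = 1/L satisfies ‖Π_S(θ − (1/L)·∇f(θ) − θ_⋆)‖ ≤ (1 − 1/(2κ_+))·‖Π_S(θ − θ_⋆)‖ + (ε/L)·‖Π_{Sᶜ}(θ − θ_⋆)‖. -/

import Mathlib

open scoped RealInnerProductSpace

/-- The orthogonal projection onto a subspace `S` of `ℝᵖ`, as a map `ℝᵖ → ℝᵖ`. -/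
noncomputable def projE {p : ℕ} (S : Submodule ℝ (EuclideanSpace ℝ (Fin p)))
    (v : EuclideanSpace ℝ (Fin p)) : EuclideanSpace ℝ (Fin p) :=
  (S.orthogonalProjectionOnto v : EuclideanSpace ℝ (Fin p))

/-- The Hessian of `f : ℝᵖ → ℝ` at `x`, as the derivative of the gradient. -/
noncomputable def hessOp {p : ℕ} (f : EuclideanSpace ℝ (Fin p) → ℝ)
    (x : EuclideanSpace ℝ (Fin p)) :
    EuclideanSpace ℝ (Fin p) →L[ℝ] EuclideanSpace ℝ (Fin p) :=
  fderiv ℝ (gradient f) x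

/-- **Bimodal Hessian condition** (Definition 3): `f` is twice continuously
differentiable, `L`-smooth and `μ`-strongly convex, its Hessian restricted to the
subspace `S` has spectrum in `[L/κ₊, L]`, restricted to `Sᗮ` has spectrum in
`[μ, κ₋·μ]`, and the cross term `Π_S ∇²f(θ) Π_{Sᶜ}` has operator norm at most `ε`. -/
def BimodalHessian {p : ℕ} (f : EuclideanSpace ℝ (Fin p) → ℝ)
    (S : Submodule ℝ (EuclideanSpace ℝ (Fin p))) (L μ κp κm ε : ℝ) : Prop :=
  0 < μ ∧ μ < L ∧ 1 ≤ κp ∧ 1 ≤ κm ∧ 0 ≤ ε ∧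
  ContDiff ℝ 2 f ∧
  (∀ x v : EuclideanSpace ℝ (Fin p),
    μ * ‖v‖ ^ 2 ≤ ⟪v, hessOp f x v⟫ ∧ ⟪v, hessOp f x v⟫ ≤ L * ‖v‖ ^ 2) ∧
  (∀ x v : EuclideanSpace ℝ (Fin p),
    L / κp * ‖projE S v‖ ^ 2 ≤ ⟪projE S v, hessOp f x (projE S v)⟫ ∧
    ⟪projE S v, hessOp f x (projE S v)⟫ ≤ L * ‖projE S v‖ ^ 2) ∧
  (∀ x v : EuclideanSpace ℝ (Fin p),
    μ * ‖projE Sᗮ v‖ ^ 2 ≤ ⟪projE Sᗮ v, hessOp f x (projE Sᗮ v)⟫ ∧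
    ⟪projE Sᗮ v, hessOp f x (projE Sᗮ v)⟫ ≤ κm * μ * ‖projE Sᗮ v‖ ^ 2) ∧
  (∀ x v : EuclideanSpace ℝ (Fin p),
    ‖projE S (hessOp f x (projE Sᗮ v))‖ ≤ ε * ‖v‖)

/-
Write `d = θ - θ⋆`, `u = Π_S d`, `w = Π_{Sᗮ} d`. Since `∇f(θ⋆) = 0`, the fundamental theorem of
calculus gives `∇f(θ) = H d` for the averaged Hessian `H = ∫₀¹ ∇²f(θ⋆ + s d) ds`, which is again
symmetric with `0 ⪯ H ⪯ L`, `⟪u, H u⟫ ≥ (L/κ₊)‖u‖²` and `‖Π_S H w‖ ≤ ε‖w‖`. Hence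
`Π_S(d - H d / L) = (u - Π_S H u / L) - Π_S H w / L`. For a symmetric `0 ⪯ H ⪯ L` one has
`‖H u‖² ≤ L ⟪u, H u⟫`, so `‖u - Π_S H u / L‖² ≤ ‖u‖² - ⟪u, H u⟫ / L ≤ (1 - 1/κ₊)‖u‖²
≤ (1 - 1/(2κ₊))²‖u‖²`, and the second term is at most `(ε/L)‖w‖`.
-/

namespace LinearMap.IsSymmetric

variable {E : Type*} [NormedAddCommGroup E] [InnerProductSpace ℝ E]
  {T : E →ₗ[ℝ] E} {L : ℝ}

theorem norm_sq_apply_le_mul_inner (hT : T.IsSymmetric) (hL : 0 < L)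
    (hnonneg : ∀ v, 0 ≤ ⟪v, T v⟫) (hle : ∀ v, ⟪v, T v⟫ ≤ L * ‖v‖ ^ 2) (u : E) :
    ‖T u‖ ^ 2 ≤ L * ⟪u, T u⟫ := by
  set x := T u
  have hux : ⟪u, T x⟫ = ‖x‖ ^ 2 := by rw [← hT, real_inner_self_eq_norm_sq]
  have hxu : ⟪x, T u⟫ = ‖x‖ ^ 2 := real_inner_self_eq_norm_sq x
  -- positivity of the form at `u - L⁻¹ x` together with the upper bound at `x`
  have key := hnonneg (u - L⁻¹ • x)
  simp only [map_sub, map_smul, inner_sub_left, inner_sub_right, real_inner_smul_left,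
    real_inner_smul_right, hux, hxu] at key
  have hx := hle x
  field_simp at key
  nlinarith

theorem norm_sub_inv_smul_starProjection_le (hT : T.IsSymmetric) (hL : 0 < L)
    (hnonneg : ∀ v, 0 ≤ ⟪v, T v⟫) (hle : ∀ v, ⟪v, T v⟫ ≤ L * ‖v‖ ^ 2)
    (K : Submodule ℝ E) [K.HasOrthogonalProjection] {u : E} (hu : u ∈ K) {κ : ℝ}
    (hκ : 1 ≤ κ) (hlow : L / κ * ‖u‖ ^ 2 ≤ ⟪u, T u⟫) :
    ‖u - L⁻¹ • K.starProjection (T u)‖ ≤ (1 - 1 / (2 * κ)) * ‖u‖ := by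
  set y := K.starProjection (T u)
  have hy : ⟪u, y⟫ = ⟪u, T u⟫ := by
    rw [← K.inner_starProjection_left_eq_right, K.starProjection_eq_self_iff.2 hu]
  have hyT : ‖y‖ ^ 2 ≤ L * ⟪u, T u⟫ :=
    (pow_le_pow_left₀ (norm_nonneg _) (K.norm_starProjection_apply_le _) 2).trans
      (hT.norm_sq_apply_le_mul_inner hL hnonneg hle u)
  have hκ0 : 0 < κ := by linarith
  have hsq : ‖u - L⁻¹ • y‖ ^ 2 ≤ ((1 - 1 / (2 * κ)) * ‖u‖) ^ 2 := by
    rw [norm_sub_sq_real, real_inner_smul_right, norm_smul, Real.norm_of_nonneg (by positivity),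
      hy]
    set Q := ⟪u, T u⟫
    have hyQ : (L⁻¹ * ‖y‖) ^ 2 ≤ L⁻¹ * Q := by
      rw [mul_pow, sq, mul_assoc]
      exact mul_le_mul_of_nonneg_left (by rwa [inv_mul_le_iff₀ hL]) (by positivity)
    have hQu : ‖u‖ ^ 2 / κ ≤ L⁻¹ * Q := by
      rw [le_inv_mul_iff₀ hL]; linarith [show L * (‖u‖ ^ 2 / κ) = L / κ * ‖u‖ ^ 2 by ring]
    calc ‖u‖ ^ 2 - 2 * (L⁻¹ * Q) + (L⁻¹ * ‖y‖) ^ 2 ≤ ‖u‖ ^ 2 - ‖u‖ ^ 2 / κ := by linarith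
      _ = ((1 - 1 / (2 * κ)) * ‖u‖) ^ 2 - (‖u‖ / (2 * κ)) ^ 2 := by field_simp; ring
      _ ≤ ((1 - 1 / (2 * κ)) * ‖u‖) ^ 2 := sub_le_self _ (sq_nonneg _)
  have hc : 0 ≤ 1 - 1 / (2 * κ) := by
    rw [sub_nonneg, div_le_one (by positivity)]; linarith
  exact (pow_le_pow_iff_left₀ (norm_nonneg _) (by positivity) two_ne_zero).1 hsq

end LinearMap.IsSymmetric

open InnerProductSpace

theorem ContDiff.gradient {F : Type*} [NormedAddCommGroup F] [InnerProductSpace ℝ F]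
    [CompleteSpace F] {f : F → ℝ} {n : WithTop ℕ∞} (hf : ContDiff ℝ (n + 1) f) :
    ContDiff ℝ n (gradient f) :=
  (toDual ℝ F).symm.contDiff.comp (hf.fderiv_right le_rfl)

theorem IsLocalMin.gradient_eq_zero {F : Type*} [NormedAddCommGroup F] [InnerProductSpace ℝ F]
    [CompleteSpace F] {f : F → ℝ} {x : F} (h : IsLocalMin f x) : gradient f x = 0 := by
  simp [_root_.gradient, h.fderiv_eq_zero]

variable {p : ℕ} {f : EuclideanSpace ℝ (Fin p) → ℝ}

theorem continuous_hessOp (hf : ContDiff ℝ 2 f) : Continuous (hessOp f) :=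
  (hf.gradient (n := 1)).continuous_fderiv one_ne_zero

theorem inner_hessOp_apply (x a b : EuclideanSpace ℝ (Fin p)) :
    ⟪hessOp f x a, b⟫ = fderiv ℝ (fderiv ℝ f) x a b := by
  have : gradient f = (toDual ℝ _).symm ∘ fderiv ℝ f := rfl
  rw [hessOp, this, LinearIsometryEquiv.comp_fderiv]
  exact toDual_symm_apply

theorem isSymmetric_hessOp (hf : ContDiff ℝ 2 f) (x : EuclideanSpace ℝ (Fin p)) :
    (hessOp f x : EuclideanSpace ℝ (Fin p) →ₗ[ℝ] EuclideanSpace ℝ (Fin p)).IsSymmetric := by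
  intro a b
  rw [ContinuousLinearMap.coe_coe, real_inner_comm _ a, inner_hessOp_apply, inner_hessOp_apply]
  exact hf.contDiffAt.isSymmSndFDerivAt (by simp) a b

theorem ContDiff.sub_eq_intervalIntegral_fderiv_apply {E F : Type*} [NormedAddCommGroup E]
    [NormedSpace ℝ E] [NormedAddCommGroup F] [NormedSpace ℝ F] [CompleteSpace F] {g : E → F}
    (hg : ContDiff ℝ 1 g) (x y : E) :
    g y - g x = (∫ s in (0 : ℝ)..1, fderiv ℝ g (x + s • (y - x))) (y - x) := by
  have hγ : ∀ s : ℝ, HasDerivAt (fun t : ℝ => x + t • (y - x)) (y - x) s := fun s => by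
    simpa using ((hasDerivAt_id s).smul_const (y - x)).const_add x
  have hcont : Continuous fun s : ℝ => fderiv ℝ g (x + s • (y - x)) :=
    (hg.continuous_fderiv one_ne_zero).comp (by fun_prop)
  rw [ContinuousLinearMap.intervalIntegral_apply (hcont.intervalIntegrable 0 1),
    intervalIntegral.integral_eq_sub_of_hasDerivAt
      (fun s _ => ((hg.differentiable one_ne_zero _).hasFDerivAt).comp_hasDerivAt s (hγ s))
      ((hcont.clm_apply continuous_const).intervalIntegrable 0 1)]
  simp

theorem continuous_hessOp_segment (hf : ContDiff ℝ 2 f) (x y : EuclideanSpace ℝ (Fin p)) :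
    Continuous fun s : ℝ => hessOp f (x + s • (y - x)) :=
  (continuous_hessOp hf).comp (by fun_prop)

noncomputable def avgHessOp (f : EuclideanSpace ℝ (Fin p) → ℝ) (x y : EuclideanSpace ℝ (Fin p)) :
    EuclideanSpace ℝ (Fin p) →L[ℝ] EuclideanSpace ℝ (Fin p) :=
  ∫ s in (0 : ℝ)..1, hessOp f (x + s • (y - x))

theorem gradient_sub_gradient_eq_avgHessOp_apply (hf : ContDiff ℝ 2 f)
    (x y : EuclideanSpace ℝ (Fin p)) :
    gradient f y - gradient f x = avgHessOp f x y (y - x) :=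
  (hf.gradient (n := 1)).sub_eq_intervalIntegral_fderiv_apply x y

theorem apply_avgHessOp_apply {F : Type*} [NormedAddCommGroup F] [NormedSpace ℝ F]
    [CompleteSpace F] (hf : ContDiff ℝ 2 f) (Q : EuclideanSpace ℝ (Fin p) →L[ℝ] F)
    (x y v : EuclideanSpace ℝ (Fin p)) :
    Q (avgHessOp f x y v) = ∫ s in (0 : ℝ)..1, Q (hessOp f (x + s • (y - x)) v) := by
  have hcont := continuous_hessOp_segment hf x y
  rw [avgHessOp, ContinuousLinearMap.intervalIntegral_apply (hcont.intervalIntegrable 0 1),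
    Q.intervalIntegral_comp_comm ((hcont.clm_apply continuous_const).intervalIntegrable 0 1)]

theorem inner_avgHessOp_apply (hf : ContDiff ℝ 2 f) (x y a b : EuclideanSpace ℝ (Fin p)) :
    ⟪a, avgHessOp f x y b⟫ = ∫ s in (0 : ℝ)..1, ⟪a, hessOp f (x + s • (y - x)) b⟫ :=
  apply_avgHessOp_apply hf (innerSL ℝ a) x y b

theorem isSymmetric_avgHessOp (hf : ContDiff ℝ 2 f) (x y : EuclideanSpace ℝ (Fin p)) :
    (avgHessOp f x y : EuclideanSpace ℝ (Fin p) →ₗ[ℝ] EuclideanSpace ℝ (Fin p)).IsSymmetric := by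
  intro a b
  rw [ContinuousLinearMap.coe_coe, real_inner_comm, inner_avgHessOp_apply hf,
    inner_avgHessOp_apply hf]
  congr! 2 with s
  exact (real_inner_comm _ _).trans (isSymmetric_hessOp hf _ a b)

theorem intervalIntegrable_inner_hessOp_segment (hf : ContDiff ℝ 2 f)
    (x y a b : EuclideanSpace ℝ (Fin p)) :
    IntervalIntegrable (fun s : ℝ => ⟪a, hessOp f (x + s • (y - x)) b⟫) MeasureTheory.volume 0 1 :=
  (continuous_const.inner ((continuous_hessOp_segment hf x y).clm_apply continuous_const)
    ).intervalIntegrable 0 1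

theorem inner_avgHessOp_le (hf : ContDiff ℝ 2 f) {a b : EuclideanSpace ℝ (Fin p)} {C : ℝ}
    (h : ∀ z, ⟪a, hessOp f z b⟫ ≤ C) (x y : EuclideanSpace ℝ (Fin p)) :
    ⟪a, avgHessOp f x y b⟫ ≤ C := by
  rw [inner_avgHessOp_apply hf]
  simpa using intervalIntegral.integral_mono_on zero_le_one
    (intervalIntegrable_inner_hessOp_segment hf x y a b) intervalIntegrable_const fun s _ => h _

theorem le_inner_avgHessOp (hf : ContDiff ℝ 2 f) {a b : EuclideanSpace ℝ (Fin p)} {C : ℝ}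
    (h : ∀ z, C ≤ ⟪a, hessOp f z b⟫) (x y : EuclideanSpace ℝ (Fin p)) :
    C ≤ ⟪a, avgHessOp f x y b⟫ := by
  rw [inner_avgHessOp_apply hf]
  simpa using intervalIntegral.integral_mono_on zero_le_one intervalIntegrable_const
    (intervalIntegrable_inner_hessOp_segment hf x y a b) fun s _ => h _

theorem norm_apply_avgHessOp_le {F : Type*} [NormedAddCommGroup F] [NormedSpace ℝ F]
    [CompleteSpace F] (hf : ContDiff ℝ 2 f) (Q : EuclideanSpace ℝ (Fin p) →L[ℝ] F)
    {v : EuclideanSpace ℝ (Fin p)} {C : ℝ} (h : ∀ z, ‖Q (hessOp f z v)‖ ≤ C)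
    (x y : EuclideanSpace ℝ (Fin p)) : ‖Q (avgHessOp f x y v)‖ ≤ C := by
  rw [apply_avgHessOp_apply hf]
  simpa using intervalIntegral.norm_integral_le_of_norm_le_const (a := 0) (b := 1) fun s _ => h _

theorem projE_apply (S : Submodule ℝ (EuclideanSpace ℝ (Fin p))) (v : EuclideanSpace ℝ (Fin p)) :
    projE S v = S.starProjection v :=
  rfl

namespace BimodalHessian

variable {S : Submodule ℝ (EuclideanSpace ℝ (Fin p))} {L μ κp κm ε : ℝ}

theorem norm_sub_inv_smul_starProjection_avgHessOp_le (hbim : BimodalHessian f S L μ κp κm ε)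
    (x y v : EuclideanSpace ℝ (Fin p)) :
    ‖S.starProjection v - L⁻¹ • S.starProjection (avgHessOp f x y (S.starProjection v))‖
      ≤ (1 - 1 / (2 * κp)) * ‖S.starProjection v‖ := by
  obtain ⟨hμ, hμL, hκp, -, -, hf, hH, hHS, -⟩ := hbim
  exact (isSymmetric_avgHessOp hf x y).norm_sub_inv_smul_starProjection_le (hμ.trans hμL)
    (fun a => le_inner_avgHessOp hf
      (fun z => (mul_nonneg hμ.le (sq_nonneg _)).trans (hH z a).1) x y)
    (fun a => inner_avgHessOp_le hf (fun z => (hH z a).2) x y) S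
    (S.starProjection_apply_mem v) hκp (le_inner_avgHessOp hf (fun z => (hHS z v).1) x y)

theorem norm_starProjection_avgHessOp_orthogonal_le (hbim : BimodalHessian f S L μ κp κm ε)
    (x y v : EuclideanSpace ℝ (Fin p)) :
    ‖S.starProjection (avgHessOp f x y (Sᗮ.starProjection v))‖ ≤ ε * ‖Sᗮ.starProjection v‖ := by
  obtain ⟨-, -, -, -, -, hf, -, -, -, hcross⟩ := hbim
  have hw : projE Sᗮ (Sᗮ.starProjection v) = Sᗮ.starProjection v :=
    Sᗮ.starProjection_eq_self_iff.2 (Sᗮ.starProjection_apply_mem v)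
  refine norm_apply_avgHessOp_le hf S.starProjection (fun z => ?_) x y
  simpa only [hw, projE_apply] using hcross z (Sᗮ.starProjection v)

end BimodalHessian

/-- **Stable step: top-subspace residual recursion** (inequality (7) in the proof of
Theorem 2).  Under the bimodal Hessian condition, a gradient step with the stable
learning rate `1/L` satisfies
`‖Π_S(θ − (1/L)∇f(θ) − θ⋆)‖ ≤ (1 − 1/(2κ₊))‖Π_S(θ − θ⋆)‖ + (ε/L)‖Π_{Sᶜ}(θ − θ⋆)‖`. -/
theorem stable_step_top_subspace
    {p : ℕ} (f : EuclideanSpace ℝ (Fin p) → ℝ)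
    (S : Submodule ℝ (EuclideanSpace ℝ (Fin p)))
    (L μ κp κm ε : ℝ) (hbim : BimodalHessian f S L μ κp κm ε)
    (θstar : EuclideanSpace ℝ (Fin p)) (hmin : ∀ x, f θstar ≤ f x)
    (θ : EuclideanSpace ℝ (Fin p)) :
    ‖projE S (θ - (1 / L) • gradient f θ - θstar)‖
      ≤ (1 - 1 / (2 * κp)) * ‖projE S (θ - θstar)‖ + (ε / L) * ‖projE Sᗮ (θ - θstar)‖ := by
  set H := avgHessOp f θstar θ
  set u := S.starProjection (θ - θstar)
  set w := Sᗮ.starProjection (θ - θstar)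
  have htop := hbim.norm_sub_inv_smul_starProjection_avgHessOp_le θstar θ (θ - θstar)
  have hcross := hbim.norm_starProjection_avgHessOp_orthogonal_le θstar θ (θ - θstar)
  obtain ⟨hμ, hμL, -, -, -, hf, -⟩ := hbim
  have hL : 0 < L := hμ.trans hμL
  have hgrad : gradient f θ = H (u + w) := by
    rw [S.starProjection_add_starProjection_orthogonal, ← sub_zero (gradient f θ),
      ← IsLocalMin.gradient_eq_zero (Filter.Eventually.of_forall hmin),
      gradient_sub_gradient_eq_avgHessOp_apply hf]
  have hstep : S.starProjection (θ - (1 / L) • gradient f θ - θstar)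
      = (u - L⁻¹ • S.starProjection (H u)) - L⁻¹ • S.starProjection (H w) := by
    rw [hgrad, sub_right_comm, map_sub, map_smul, map_add, map_add, one_div, smul_add, sub_sub]
  simp only [projE_apply]
  calc _ ≤ ‖u - L⁻¹ • S.starProjection (H u)‖ + L⁻¹ * ‖S.starProjection (H w)‖ := by
        rw [hstep, ← norm_smul_of_nonneg (inv_nonneg.2 hL.le)]
        exact norm_sub_le _ _
    _ ≤ (1 - 1 / (2 * κp)) * ‖u‖ + L⁻¹ * (ε * ‖w‖) := by gcongr
    _ = _ := by ring
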